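/- arXiv:2007.08174 — 8 statements merged into one kernel-verified Lean document; each statement's English description precedes it below -/
import Mathlib

section
/- The cohesive density ψ is Lipschitz continuous on ℝ × [0,∞): there exists a constant L ≥ 0 such that |ψ(w₁,ξ₁) − ψ(w₂,ξ₂)| ≤ L·(|w₁ − w₂| + |ξ₁ − ξ₂|) for all w₁, w₂ ∈ ℝ and all ξ₁, ξ₂ ≥ 0. -/
/-!
ψ is Lipschitz in each variable separately, uniformly in the other, and
`LipschitzWith.uncurry` combines the two estimates.

In `w`, ψ(·, ξ) depends only on `a = |w|`: on `[0, ξ]` it is a quadratic in `a` with slope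
`ψ̂'(ξ) a / ξ`, on `[ξ, ∞)` it is `ψ̂`, so its slope never exceeds `sup |ψ̂'|`.

In `ξ`, ψ(w, ξ) = q(max ξ |w|) with `q ξ = ψ̂ ξ - ψ̂' ξ · u ξ`, `u ξ = (ξ² - w²)/(2ξ)`.
On `[|w|, ∞)` the factor `u` is 1-Lipschitz, and it is bounded by `ξc / 2` on `[|w|, ξc]`;
there `ψ̂'` is bounded and Lipschitz since `ψ̂` is `C²`, while beyond `ξc` the product vanishes
because `ψ̂` is constant, so `ψ̂' = 0`.
-/

open Set
open scoped NNReal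

/-- The cohesive density ψ(w,ξ) = ψ̂(|w|) if |w| ≥ ξ, and
ψ(w,ξ) = ψ̂(ξ) − ψ̂'(ξ)·(ξ² − w²)/(2ξ) if |w| < ξ. -/
noncomputable def cohesive (psih psih' : ℝ → ℝ) (w ξ : ℝ) : ℝ :=
  if ξ ≤ |w| then psih |w| else psih ξ - psih' ξ * ((ξ ^ 2 - w ^ 2) / (2 * ξ))

theorem LipschitzOnWith.congr {α β : Type*} [PseudoEMetricSpace α] [PseudoEMetricSpace β]
    {K : ℝ≥0} {s : Set α} {f g : α → β} (hf : LipschitzOnWith K f s) (h : EqOn f g s) :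
    LipschitzOnWith K g s := fun x hx y hy => by
  rw [← h hx, ← h hy]
  exact hf hx hy

theorem LipschitzOnWith.Ici_of_Icc_of_Ici {β : Type*} [PseudoMetricSpace β] {K : ℝ≥0}
    {f : ℝ → β} {l c : ℝ} (h₁ : LipschitzOnWith K f (Icc l c)) (h₂ : LipschitzOnWith K f (Ici c)) :
    LipschitzOnWith K f (Ici l) := by
  have dist_le_of_le : ∀ x ∈ Ici l, ∀ y ∈ Ici l, x ≤ y → dist (f x) (f y) ≤ K * dist x y := by
    intro x hx y hy hxy
    by_cases hyc : y ≤ c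
    · exact h₁.dist_le_mul x ⟨hx, hxy.trans hyc⟩ y ⟨hy, hyc⟩
    by_cases hxc : c ≤ x
    · exact h₂.dist_le_mul x hxc y (le_of_not_ge hyc)
    rw [not_le] at hyc hxc
    calc dist (f x) (f y) ≤ dist (f x) (f c) + dist (f c) (f y) := dist_triangle _ _ _
      _ ≤ K * dist x c + K * dist c y :=
        add_le_add (h₁.dist_le_mul x ⟨hx, hxc.le⟩ c ⟨mem_Ici.1 hx |>.trans hxc.le, le_rfl⟩)
          (h₂.dist_le_mul c (mem_Ici.2 le_rfl) y hyc.le)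
      _ = K * dist x y := by
        simp only [Real.dist_eq, abs_of_nonpos (sub_nonpos.2 hxc.le),
          abs_of_nonpos (sub_nonpos.2 hyc.le), abs_of_nonpos (sub_nonpos.2 hxy)]
        ring
  refine LipschitzOnWith.of_dist_le_mul fun x hx y hy => ?_
  rcases le_total x y with hxy | hyx
  · exact dist_le_of_le x hx y hy hxy
  · rw [dist_comm, dist_comm x]
    exact dist_le_of_le y hy x hx hyx

theorem LipschitzOnWith.mul_of_norm_le {α R : Type*} [PseudoMetricSpace α] [SeminormedRing R]
    {f g : α → R} {s : Set α} {Kf Kg Cf Cg : ℝ≥0} (hf : LipschitzOnWith Kf f s)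
    (hg : LipschitzOnWith Kg g s) (hfC : ∀ x ∈ s, ‖f x‖ ≤ Cf) (hgC : ∀ x ∈ s, ‖g x‖ ≤ Cg) :
    LipschitzOnWith (Cf * Kg + Kf * Cg) (fun x => f x * g x) s := by
  refine LipschitzOnWith.of_dist_le_mul fun x hx y hy => ?_
  have hfxy := hf.dist_le_mul x hx y hy
  have hgxy := hg.dist_le_mul x hx y hy
  rw [dist_eq_norm] at hfxy hgxy ⊢
  calc ‖f x * g x - f y * g y‖ = ‖f x * (g x - g y) + (f x - f y) * g y‖ := by noncomm_ring
    _ ≤ ‖f x‖ * ‖g x - g y‖ + ‖f x - f y‖ * ‖g y‖ :=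
      (norm_add_le _ _).trans (add_le_add (norm_mul_le _ _) (norm_mul_le _ _))
    _ ≤ Cf * (Kg * dist x y) + Kf * dist x y * Cg := by
      gcongr
      exacts [hfC x hx, hgC y hy]
    _ = ↑(Cf * Kg + Kf * Cg) * dist x y := by push_cast; ring

theorem LipschitzWith.abs_sub_le_of_uncurry {f : ℝ → ℝ → ℝ} {K : ℝ≥0}
    (hf : LipschitzWith K (Function.uncurry f)) (a b c d : ℝ) :
    |f a b - f c d| ≤ K * (|a - c| + |b - d|) :=
  calc |f a b - f c d| = dist (Function.uncurry f (a, b)) (Function.uncurry f (c, d)) :=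
        (Real.dist_eq _ _).symm
    _ ≤ K * dist (a, b) (c, d) := hf.dist_le_mul _ _
    _ ≤ K * (|a - c| + |b - d|) := by
      gcongr
      rw [Prod.dist_eq, Real.dist_eq, Real.dist_eq]
      exact max_le_add_of_nonneg (abs_nonneg _) (abs_nonneg _)

theorem HasDerivWithinAt.eq_zero_of_forall_ge_eq {F : Type*} [NormedAddCommGroup F]
    [NormedSpace ℝ F] {f : ℝ → F} {f' : F} {s : Set ℝ} {c x : ℝ}
    (hf : HasDerivWithinAt f f' s x) (hs : Ici c ⊆ s) (hx : c ≤ x)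
    (hconst : ∀ y ≥ c, f y = f c) : f' = 0 :=
  (uniqueDiffOn_Ici c x hx).eq_deriv _ (hf.mono hs)
    ((hasDerivWithinAt_const x _ (f c)).congr (fun y hy => hconst y hy) (hconst x hx))

theorem lipschitzOnWith_sq_sub_sq_div (w : ℝ) :
    LipschitzOnWith 1 (fun ξ : ℝ => (ξ ^ 2 - w ^ 2) / (2 * ξ)) (Ici |w|) := by
  refine LipschitzOnWith.mk_one fun x hx y hy => ?_
  rw [mem_Ici] at hx hy
  rcases (abs_nonneg w).eq_or_lt with hw | hw
  · have hw0 : w = 0 := abs_eq_zero.1 hw.symm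
    have half : ∀ ξ : ℝ, (ξ ^ 2 - w ^ 2) / (2 * ξ) = ξ / 2 := fun ξ => by
      rcases eq_or_ne ξ 0 with rfl | hξ
      · simp
      · field_simp; rw [hw0]; ring
    rw [half, half, Real.dist_eq, Real.dist_eq, div_sub_div_same, abs_div, abs_two]
    linarith [abs_nonneg (x - y)]
  · have hx0 : 0 < x := hw.trans_le hx
    have hy0 : 0 < y := hw.trans_le hy
    have hw2 : w ^ 2 ≤ x * y := by
      rw [← sq_abs]; nlinarith [abs_nonneg w]
    have hfactor : 0 ≤ 1 / 2 + w ^ 2 / (2 * x * y) := by positivity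
    have hfactor' : 1 / 2 + w ^ 2 / (2 * x * y) ≤ 1 := by
      rw [div_add_div _ _ two_ne_zero (by positivity), div_le_one (by positivity)]
      nlinarith
    calc dist ((x ^ 2 - w ^ 2) / (2 * x)) ((y ^ 2 - w ^ 2) / (2 * y))
        = |x - y| * (1 / 2 + w ^ 2 / (2 * x * y)) := by
          rw [Real.dist_eq, ← abs_of_nonneg hfactor, ← abs_mul]
          congr 1
          field_simp
          ring
      _ ≤ dist x y := by
          rw [Real.dist_eq]
          exact mul_le_of_le_one_right (abs_nonneg _) hfactor'

theorem abs_sq_sub_sq_div_le {w ξ : ℝ} (h : |w| ≤ ξ) : |(ξ ^ 2 - w ^ 2) / (2 * ξ)| ≤ ξ / 2 := by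
  have hξ : 0 ≤ ξ := (abs_nonneg w).trans h
  have hw2 : w ^ 2 ≤ ξ ^ 2 := by rw [← sq_abs]; exact pow_le_pow_left₀ (abs_nonneg w) h 2
  rw [abs_of_nonneg (div_nonneg (sub_nonneg.2 hw2) (by positivity))]
  rcases hξ.eq_or_lt with rfl | hξ
  · simp
  · rw [div_le_iff₀ (by positivity)]
    nlinarith [sq_nonneg w]

section Cohesive

variable {psih psih' : ℝ → ℝ} {w ξ : ℝ}

theorem cohesive_of_le (h : ξ ≤ |w|) : cohesive psih psih' w ξ = psih |w| := if_pos h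

theorem cohesive_of_abs_le (h : |w| ≤ ξ) :
    cohesive psih psih' w ξ = psih ξ - psih' ξ * ((ξ ^ 2 - w ^ 2) / (2 * ξ)) := by
  rcases h.lt_or_eq with h | h
  · exact if_neg (not_le.2 h)
  · rw [cohesive_of_le h.ge, h, ← sq_abs w, h]
    simp

theorem cohesive_abs : cohesive psih psih' |w| ξ = cohesive psih psih' w ξ := by
  simp only [cohesive, abs_abs, sq_abs]

theorem cohesive_max_abs : cohesive psih psih' w (max ξ |w|) = cohesive psih psih' w ξ := by
  rcases le_total ξ |w| with h | h
  · rw [max_eq_right h, cohesive_of_le le_rfl, cohesive_of_le h]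
  · rw [max_eq_left h]

variable {M₁ M₂ : ℝ≥0} {ξc : ℝ}

theorem lipschitzOnWith_cohesive_Icc (hψ'_bdd : ∀ ξ ∈ Ici 0, ‖psih' ξ‖ ≤ M₁) (ξ : ℝ) :
    LipschitzOnWith M₁ (fun a => cohesive psih psih' a ξ) (Icc 0 ξ) := by
  refine LipschitzOnWith.of_dist_le_mul fun x hx y hy => ?_
  have hξ : 0 ≤ ξ := hx.1.trans hx.2
  have hr : 0 ≤ (x + y) / (2 * ξ) := div_nonneg (by linarith [hx.1, hy.1]) (by positivity)
  have hr' : (x + y) / (2 * ξ) ≤ 1 := div_le_one_of_le₀ (by linarith [hx.2, hy.2]) (by positivity)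
  rw [cohesive_of_abs_le (by rw [abs_of_nonneg hx.1]; exact hx.2),
    cohesive_of_abs_le (by rw [abs_of_nonneg hy.1]; exact hy.2)]
  calc dist (psih ξ - psih' ξ * ((ξ ^ 2 - x ^ 2) / (2 * ξ)))
        (psih ξ - psih' ξ * ((ξ ^ 2 - y ^ 2) / (2 * ξ)))
      = ‖psih' ξ‖ * (dist x y * ((x + y) / (2 * ξ))) := by
        rw [Real.dist_eq, Real.dist_eq, Real.norm_eq_abs, ← abs_of_nonneg hr, ← abs_mul,
          ← abs_mul]
        ring_nf
    _ ≤ M₁ * (dist x y * 1) := by gcongr; exact hψ'_bdd ξ hξ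
    _ = M₁ * dist x y := by rw [mul_one]

theorem lipschitzWith_cohesive_left (hψ_lip : LipschitzOnWith M₁ psih (Ici 0))
    (hψ'_bdd : ∀ ξ ∈ Ici 0, ‖psih' ξ‖ ≤ M₁) (ξ : ℝ) :
    LipschitzWith M₁ (fun w => cohesive psih psih' w ξ) := by
  have habs : LipschitzWith 1 (abs : ℝ → ℝ) :=
    LipschitzWith.mk_one fun x y => abs_abs_sub_abs_le_abs_sub x y
  have hψabs : LipschitzWith M₁ (psih ∘ abs) := by
    simpa only [mul_one, lipschitzOnWith_univ] using
      hψ_lip.comp habs.lipschitzOnWith (s := univ) fun w _ => abs_nonneg w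
  have hIci : LipschitzOnWith M₁ (fun a => cohesive psih psih' a ξ) (Ici 0) :=
    (lipschitzOnWith_cohesive_Icc hψ'_bdd ξ).Ici_of_Icc_of_Ici
      (hψabs.lipschitzOnWith.congr fun a ha => (cohesive_of_le (ha.trans (le_abs_self a))).symm)
  simpa only [mul_one, lipschitzOnWith_univ, Function.comp_def, cohesive_abs] using
    hIci.comp habs.lipschitzOnWith (s := univ) fun w _ => abs_nonneg w

theorem lipschitzOnWith_mul_sq_sub_sq_div (hψ'_bdd : ∀ ξ ∈ Ici 0, ‖psih' ξ‖ ≤ M₁)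
    (hψ'_lip : LipschitzOnWith M₂ psih' (Icc 0 ξc)) (hψ'_zero : ∀ ξ ≥ ξc, psih' ξ = 0) (w : ℝ) :
    LipschitzOnWith (M₁ + M₂ * (ξc / 2).toNNReal)
      (fun ξ => psih' ξ * ((ξ ^ 2 - w ^ 2) / (2 * ξ))) (Ici |w|) := by
  refine LipschitzOnWith.Ici_of_Icc_of_Ici (c := ξc) ?_ ?_
  · simpa only [mul_one] using
      (hψ'_lip.mono (Icc_subset_Icc_left (abs_nonneg w))).mul_of_norm_le
        ((lipschitzOnWith_sq_sub_sq_div w).mono Icc_subset_Ici_self)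
        (fun ξ hξ => hψ'_bdd ξ ((abs_nonneg w).trans hξ.1))
        (fun ξ hξ => by
          rw [Real.norm_eq_abs]
          linarith [abs_sq_sub_sq_div_le hξ.1, hξ.2, Real.le_coe_toNNReal (ξc / 2)])
  · exact (LipschitzWith.const' 0).lipschitzOnWith.congr fun ξ hξ => by simp [hψ'_zero ξ hξ]

theorem lipschitzWith_cohesive_right (hψ_lip : LipschitzOnWith M₁ psih (Ici 0))
    (hψ'_bdd : ∀ ξ ∈ Ici 0, ‖psih' ξ‖ ≤ M₁) (hψ'_lip : LipschitzOnWith M₂ psih' (Icc 0 ξc))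
    (hψ'_zero : ∀ ξ ≥ ξc, psih' ξ = 0) (w : ℝ) :
    LipschitzWith (M₁ + (M₁ + M₂ * (ξc / 2).toNNReal)) (cohesive psih psih' w) := by
  have hq := (hψ_lip.mono (Ici_subset_Ici.2 (abs_nonneg w))).sub
    (lipschitzOnWith_mul_sq_sub_sq_div hψ'_bdd hψ'_lip hψ'_zero w)
  have := hq.comp (LipschitzWith.id.max_const |w|).lipschitzOnWith (s := univ)
    fun ξ _ => le_max_right ξ |w|
  rw [lipschitzOnWith_univ, mul_one] at this
  have hcomp : cohesive psih psih' w = (fun ξ => psih ξ - psih' ξ * ((ξ ^ 2 - w ^ 2) / (2 * ξ))) ∘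
      fun ξ => max (id ξ) |w| := funext fun ξ => by
    rw [Function.comp_apply, id, ← cohesive_max_abs, cohesive_of_abs_le (le_max_right _ _)]
  rwa [hcomp]

end Cohesive

theorem cohesive_lipschitz_general
    (ξc : ℝ) (hξc : 0 < ξc) (psih psih' psih'' : ℝ → ℝ)
    (hconst : ∀ w ≥ ξc, psih w = psih ξc)
    (hC1 : ∀ w ∈ Set.Ici (0:ℝ), HasDerivWithinAt psih (psih' w) (Set.Ici 0) w)
    (hC1c : ContinuousOn psih' (Set.Ici 0))
    (hC2 : ∀ w ∈ Set.Icc (0:ℝ) ξc, HasDerivWithinAt psih' (psih'' w) (Set.Icc 0 ξc) w)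
    (hC2c : ContinuousOn psih'' (Set.Icc 0 ξc)) :
    ∃ L : ℝ, 0 ≤ L ∧ ∀ w₁ w₂ ξ₁ ξ₂ : ℝ, 0 ≤ ξ₁ → 0 ≤ ξ₂ →
      |cohesive psih psih' w₁ ξ₁ - cohesive psih psih' w₂ ξ₂| ≤
        L * (|w₁ - w₂| + |ξ₁ - ξ₂|) := by
  obtain ⟨C₁, hC₁⟩ := isCompact_Icc.exists_bound_of_continuousOn (hC1c.mono Icc_subset_Ici_self)
  obtain ⟨C₂, hC₂⟩ := isCompact_Icc.exists_bound_of_continuousOn hC2c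
  have hψ'_zero : ∀ ξ ≥ ξc, psih' ξ = 0 := fun ξ hξ =>
    (hC1 ξ (hξc.le.trans hξ)).eq_zero_of_forall_ge_eq (Ici_subset_Ici.2 hξc.le) hξ hconst
  have hψ'_bdd : ∀ ξ ∈ Ici 0, ‖psih' ξ‖ ≤ C₁.toNNReal := fun ξ hξ => by
    rcases le_total ξ ξc with h | h
    · exact (hC₁ ξ ⟨hξ, h⟩).trans (Real.le_coe_toNNReal C₁)
    · simp [hψ'_zero ξ h]
  have hψ_lip : LipschitzOnWith C₁.toNNReal psih (Ici 0) :=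
    (convex_Ici 0).lipschitzOnWith_of_nnnorm_hasDerivWithin_le hC1 fun ξ hξ => by
      rw [← NNReal.coe_le_coe, coe_nnnorm]; exact hψ'_bdd ξ hξ
  have hψ'_lip : LipschitzOnWith C₂.toNNReal psih' (Icc 0 ξc) :=
    (convex_Icc 0 ξc).lipschitzOnWith_of_nnnorm_hasDerivWithin_le hC2 fun ξ hξ => by
      rw [← NNReal.coe_le_coe, coe_nnnorm]; exact (hC₂ ξ hξ).trans (Real.le_coe_toNNReal C₂)
  have hLip := LipschitzWith.uncurry (lipschitzWith_cohesive_left hψ_lip hψ'_bdd)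
    (lipschitzWith_cohesive_right hψ_lip hψ'_bdd hψ'_lip hψ'_zero)
  exact ⟨_, NNReal.coe_nonneg _, fun w₁ w₂ ξ₁ ξ₂ _ _ => hLip.abs_sub_le_of_uncurry w₁ ξ₁ w₂ ξ₂⟩

/-- the cohesive density ψ is Lipschitz continuous on ℝ × [0,∞). -/
theorem cohesive_lipschitz
    (ξc : ℝ) (hξc : 0 < ξc) (psih psih' psih'' : ℝ → ℝ)
    (hnn : ∀ w ≥ (0:ℝ), 0 ≤ psih w)
    (hconc : ConcaveOn ℝ (Set.Ici 0) psih)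
    (h0 : psih 0 = 0)
    (hpos : ∀ w > (0:ℝ), 0 < psih w)
    (hconst : ∀ w ≥ ξc, psih w = psih ξc)
    (hC1 : ∀ w ∈ Set.Ici (0:ℝ), HasDerivWithinAt psih (psih' w) (Set.Ici 0) w)
    (hC1c : ContinuousOn psih' (Set.Ici 0))
    (hC2 : ∀ w ∈ Set.Icc (0:ℝ) ξc, HasDerivWithinAt psih' (psih'' w) (Set.Icc 0 ξc) w)
    (hC2c : ContinuousOn psih'' (Set.Icc 0 ξc)) :
    ∃ L : ℝ, 0 ≤ L ∧ ∀ w₁ w₂ ξ₁ ξ₂ : ℝ, 0 ≤ ξ₁ → 0 ≤ ξ₂ →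
      |cohesive psih psih' w₁ ξ₁ - cohesive psih psih' w₂ ξ₂| ≤
        L * (|w₁ - w₂| + |ξ₁ - ξ₂|) :=
  cohesive_lipschitz_general ξc hξc psih psih' psih'' hconst hC1 hC1c hC2 hC2c
end

section
/- For every fixed w ∈ ℝ, the map ξ ↦ ψ(w,ξ) is monotone nondecreasing on [0,∞). -/
/-!
Write `a = |w|` and `m(ξ) = (ξ² + a²)/(2ξ)`. For `ξ ≥ a` the cohesive density is the tangent line
of `ψ̂` at `ξ` evaluated at `m(ξ)`, and for `ξ ≤ a` it equals its value at `ξ = a`. On `[a, ∞)` the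
point `m(ξ) ≤ ξ` moves to the right as `ξ` grows. For a concave function, the tangent at a larger
abscissa lies above the one at a smaller abscissa to the left of the latter, and tangent lines are
nondecreasing because `ψ̂' ≥ 0` (concave and eventually constant). Hence `ξ ↦ ψ(w, ξ)` is monotone.
-/

open Set

namespace ConcaveOn

variable {S : Set ℝ} {f f' : ℝ → ℝ} {x y z d : ℝ}

theorem le_tangent_of_hasDerivWithinAt (hf : ConcaveOn ℝ S f) (hx : x ∈ S) (hy : y ∈ S)
    (hd : HasDerivWithinAt f d S y) : f x ≤ f y + d * (x - y) := by
  rcases lt_trichotomy x y with hxy | rfl | hyx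
  · have hslope := hf.le_slope_of_hasDerivWithinAt hx hy hxy hd
    rw [slope_def_field, le_div_iff₀ (sub_pos.2 hxy)] at hslope
    linarith
  · simp
  · have hslope := hf.slope_le_of_hasDerivWithinAt hy hx hyx hd
    rw [slope_def_field, div_le_iff₀ (sub_pos.2 hyx)] at hslope
    linarith

variable (hf : ConcaveOn ℝ S f) (hf' : ∀ x ∈ S, HasDerivWithinAt f (f' x) S x)
include hf hf'

theorem antitoneOn_of_hasDerivWithinAt : AntitoneOn f' S := by
  intro x hx y hy hxy
  rcases hxy.eq_or_lt with rfl | hxy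
  · rfl
  · exact (hf.le_slope_of_hasDerivWithinAt hx hy hxy (hf' y hy)).trans
      (hf.slope_le_of_hasDerivWithinAt hx hy hxy (hf' x hx))

theorem tangent_le_tangent (hy : y ∈ S) (hz : z ∈ S) (hxy : x ≤ y) (hyz : y ≤ z) :
    f y + f' y * (x - y) ≤ f z + f' z * (x - z) := by
  have htangent := hf.le_tangent_of_hasDerivWithinAt hy hz (hf' z hz)
  have hslope : f' y * (x - y) ≤ f' z * (x - y) :=
    mul_le_mul_of_nonpos_right (hf.antitoneOn_of_hasDerivWithinAt hf' hy hz hyz) (sub_nonpos.2 hxy)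
  linarith

theorem monotoneOn_tangent_apply {m : ℝ → ℝ} (hf'_nonneg : ∀ x ∈ S, 0 ≤ f' x)
    (hm : MonotoneOn m S) (hm_le : ∀ x ∈ S, m x ≤ x) :
    MonotoneOn (fun x => f x + f' x * (m x - x)) S := by
  intro x hx y hy hxy
  calc f x + f' x * (m x - x)
      ≤ f y + f' y * (m x - y) := hf.tangent_le_tangent hf' hx hy (hm_le x hx) hxy
    _ ≤ f y + f' y * (m y - y) := by
        gcongr
        · exact hf'_nonneg y hy
        · exact hm hx hy hxy

end ConcaveOn

theorem ConcaveOn.nonneg_of_hasDerivWithinAt_of_const_Ici {f f' : ℝ → ℝ} {b c : ℝ}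
    (hf : ConcaveOn ℝ (Ici b) f) (hf' : ∀ x ∈ Ici b, HasDerivWithinAt f (f' x) (Ici b) x)
    (hconst : ∀ x ≥ c, f x = f c) : ∀ x ∈ Ici b, 0 ≤ f' x := by
  intro x hx
  have hy : max x c ∈ Ici b := le_max_of_le_left (mem_Ici.1 hx)
  have hzero : f' (max x c) = 0 := by
    have hconst' : HasDerivWithinAt f 0 (Ici (max x c)) (max x c) :=
      (hasDerivWithinAt_const _ _ (f c)).congr (fun t ht => hconst t ((le_max_right x c).trans ht))
        (hconst _ (le_max_right x c))
    exact (uniqueDiffWithinAt_Ici _).eq_deriv _ ((hf' _ hy).mono (Ici_subset_Ici.2 hy)) hconst'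
  simpa [hzero] using hf.antitoneOn_of_hasDerivWithinAt hf' hx hy (le_max_left x c)

theorem monotoneOn_sq_add_sq_div_two_mul (w : ℝ) :
    MonotoneOn (fun ξ : ℝ => (ξ ^ 2 + w ^ 2) / (2 * ξ)) (Ici |w|) := by
  intro x hx y hy hxy
  rcases (abs_nonneg w).trans hx |>.eq_or_lt with rfl | hx0
  · -- the junk value `_ / 0 = 0` makes the left side vanish
    dsimp only
    rw [mul_zero, div_zero]
    positivity
  have hy0 : 0 < y := hx0.trans_le hxy
  have hw : w ^ 2 ≤ x * y := by
    rw [← sq_abs]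
    nlinarith [abs_nonneg w, mem_Ici.1 hx]
  rw [div_le_div_iff₀ (by positivity) (by positivity)]
  nlinarith [mul_nonneg (sub_nonneg.2 hxy) (sub_nonneg.2 hw)]

theorem sq_add_sq_div_two_mul_le {w ξ : ℝ} (hξ : |w| ≤ ξ) : (ξ ^ 2 + w ^ 2) / (2 * ξ) ≤ ξ := by
  rcases (abs_nonneg w).trans hξ |>.eq_or_lt with rfl | hξ0
  · simp
  rw [div_le_iff₀ (by positivity), ← sq_abs w]
  nlinarith [abs_nonneg w]

theorem cohesive_eq_tangent_comp_max (psih psih' : ℝ → ℝ) (w : ℝ) :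
    (fun ξ => cohesive psih psih' w ξ) =
      (fun η => psih η + psih' η * ((η ^ 2 + w ^ 2) / (2 * η) - η)) ∘ (max · |w|) := by
  funext ξ
  simp only [cohesive, Function.comp_apply]
  split_ifs with hξ
  · rw [max_eq_right hξ, ← sq_abs w]
    rcases (abs_nonneg w).eq_or_lt with h | h
    · simp [← h]
    · field_simp
      ring
  · have hξ0 : 0 < ξ := (abs_nonneg w).trans_lt (not_le.1 hξ)
    rw [max_eq_left (not_le.1 hξ).le]
    field_simp
    ring

theorem cohesive_monotone_xi_general
    (ξc : ℝ) (psih psih' : ℝ → ℝ)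
    (hconc : ConcaveOn ℝ (Set.Ici 0) psih)
    (hconst : ∀ w ≥ ξc, psih w = psih ξc)
    (hC1 : ∀ w ∈ Set.Ici (0:ℝ), HasDerivWithinAt psih (psih' w) (Set.Ici 0) w) :
    ∀ w : ℝ, MonotoneOn (fun ξ => cohesive psih psih' w ξ) (Set.Ici 0) := by
  intro w
  have hsub : Ici |w| ⊆ Ici 0 := Ici_subset_Ici.2 (abs_nonneg w)
  have hderiv : ∀ x ∈ Ici |w|, HasDerivWithinAt psih (psih' x) (Ici |w|) x :=
    fun x hx => (hC1 x (hsub hx)).mono hsub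
  have hderiv_nonneg := hconc.nonneg_of_hasDerivWithinAt_of_const_Ici hC1 hconst
  have htangent := (hconc.subset hsub (convex_Ici _)).monotoneOn_tangent_apply hderiv
    (fun x hx => hderiv_nonneg x (hsub hx)) (monotoneOn_sq_add_sq_div_two_mul w)
    (fun _ hx => sq_add_sq_div_two_mul_le hx)
  rw [cohesive_eq_tangent_comp_max]
  intro x _ y _ hxy
  exact htangent (le_max_right x |w|) (le_max_right y |w|) (max_le_max_right |w| hxy)

/-- for every fixed w, ξ ↦ ψ(w,ξ) is nondecreasing on [0,∞). -/
theorem cohesive_monotone_xi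
    (ξc : ℝ) (hξc : 0 < ξc) (psih psih' psih'' : ℝ → ℝ)
    (hnn : ∀ w ≥ (0:ℝ), 0 ≤ psih w)
    (hconc : ConcaveOn ℝ (Set.Ici 0) psih)
    (h0 : psih 0 = 0)
    (hpos : ∀ w > (0:ℝ), 0 < psih w)
    (hconst : ∀ w ≥ ξc, psih w = psih ξc)
    (hC1 : ∀ w ∈ Set.Ici (0:ℝ), HasDerivWithinAt psih (psih' w) (Set.Ici 0) w)
    (hC1c : ContinuousOn psih' (Set.Ici 0))
    (hC2 : ∀ w ∈ Set.Icc (0:ℝ) ξc, HasDerivWithinAt psih' (psih'' w) (Set.Icc 0 ξc) w)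
    (hC2c : ContinuousOn psih'' (Set.Icc 0 ξc)) :
    ∀ w : ℝ, MonotoneOn (fun ξ => cohesive psih psih' w ξ) (Set.Ici 0) :=
  cohesive_monotone_xi_general ξc psih psih' hconc hconst hC1
end

section
/- For every (w,ξ) ∈ ℝ × [0,∞) and φ ∈ ℝ, the one-sided directional derivative D(w,ξ;φ) := lim_{h→0⁺} (ψ(w + hφ, ξ) − ψ(w,ξ))/h exists. Furthermore: (i) if (wₙ,ξₙ) → (w,ξ) in ℝ × [0,∞), then limsup_{n→∞} D(wₙ,ξₙ;φ) ≤ D(w,ξ;φ) for every φ ∈ ℝ; (ii) if φₙ → φ in ℝ, then D(w,ξ;φₙ) → D(w,ξ;φ). -/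
/-!
Away from the origin `w ↦ ψ(w, ξ)` is differentiable: the two branches of `cohesive` meet on
`|w| = ξ` with equal values and equal slopes `ψ̂'(ξ) · w/ξ`. So, with `m = max |w| ξ`, the
directional derivative is `ψ̂'(m) · (w/m) · φ`, which is continuous in `(w, ξ)` because `ψ̂'` is.
At the origin `ψ(·, 0) = ψ̂(|·|)` and the derivative is `ψ̂'(0) |φ|`. Since `|w/m| ≤ 1`, nearby
values are at most `|ψ̂'(m)| |φ| → |ψ̂'(0)| |φ|`, and `ψ̂'(0) ≥ 0` because `ψ̂` is minimal at `0`;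
this is upper semicontinuity at the origin.
-/

open Filter Set Topology

theorem HasDerivAt.ite_of_eq {𝕜 F : Type*} [NontriviallyNormedField 𝕜] [NormedAddCommGroup F]
    [NormedSpace 𝕜 F] {f g : 𝕜 → F} {f' : F} {x : 𝕜} (p : 𝕜 → Prop) [DecidablePred p]
    (hf : HasDerivAt f f' x) (hg : HasDerivAt g f' x) (hfg : f x = g x) :
    HasDerivAt (fun y => if p y then f y else g y) f' x := by
  have hx : (if p x then f x else g x) = f x := by split_ifs <;> simp [hfg]
  have h₁ : HasDerivWithinAt (fun y => if p y then f y else g y) f' {y | p y} x :=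
    hf.hasDerivWithinAt.congr (fun y hy => if_pos hy) hx
  have h₂ : HasDerivWithinAt (fun y => if p y then f y else g y) f' {y | p y}ᶜ x :=
    hg.hasDerivWithinAt.congr (fun y hy => if_neg hy) (hx.trans hfg)
  simpa using h₁.union h₂

theorem HasDerivWithinAt.tendsto_lineQuotient_nhdsGT {f : ℝ → ℝ} {w φ D : ℝ}
    (h : HasDerivWithinAt (fun t => f (w + t * φ)) D (Ici 0) 0) :
    Tendsto (fun t => (f (w + t * φ) - f w) / t) (𝓝[>] 0) (𝓝 D) := by
  refine ((hasDerivWithinAt_iff_tendsto_slope' self_notMem_Ioi).mp h.Ioi_of_Ici).congr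
    fun t => ?_
  simp [slope_def_field]

theorem HasDerivWithinAt.nonneg_of_isMinOn_Ici {f : ℝ → ℝ} {f' a : ℝ}
    (hf : HasDerivWithinAt f f' (Ici a) a) (hmin : IsMinOn f (Ici a) a) : 0 ≤ f' := by
  refine ge_of_tendsto ((hasDerivWithinAt_iff_tendsto_slope' self_notMem_Ioi).mp hf.Ioi_of_Ici)
    (eventually_mem_nhdsWithin.mono fun x (hx : a < x) => ?_)
  rw [slope_def_field]
  exact div_nonneg (sub_nonneg.mpr (isMinOn_iff.mp hmin x (mem_Ici.mpr hx.le)))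
    (sub_nonneg.mpr hx.le)

theorem limsup_le_of_abs_le_of_tendsto {ι : Type*} {l : Filter ι} [l.NeBot] {u v : ι → ℝ}
    {L : ℝ} (huv : ∀ i, |u i| ≤ v i) (hv : Tendsto v l (𝓝 L)) : limsup u l ≤ L := by
  have hlow : ∀ᶠ i in l, -(L + 1) ≤ u i :=
    (hv.eventually (eventually_lt_nhds (lt_add_one L))).mono fun i hi => by
      linarith [neg_abs_le (u i), huv i]
  calc limsup u l ≤ limsup v l :=
        limsup_le_limsup (Eventually.of_forall fun i => (le_abs_self _).trans (huv i))
          (isCoboundedUnder_le_of_eventually_le l hlow) hv.isBoundedUnder_le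
    _ = L := hv.limsup_eq

theorem sign_eq_div_abs {x : ℝ} (hx : x ≠ 0) : (SignType.sign x : ℝ) = x / |x| := by
  rcases hx.lt_or_gt with h | h
  · simp [sign_neg h, abs_of_neg h, h.ne]
  · simp [sign_pos h, abs_of_pos h, h.ne']

theorem hasDerivAt_sub_mul_quadratic (a b ξ x : ℝ) (hξ : ξ ≠ 0) :
    HasDerivAt (fun y => a - b * ((ξ ^ 2 - y ^ 2) / (2 * ξ))) (b * (x / ξ)) x := by
  refine ((((hasDerivAt_pow 2 x).const_sub (ξ ^ 2)).div_const (2 * ξ)).const_mul b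
    |>.const_sub a).congr_deriv ?_
  field_simp
  ring

noncomputable def cohesiveDirDeriv (psih' : ℝ → ℝ) (w ξ φ : ℝ) : ℝ :=
  if 0 < max |w| ξ then psih' (max |w| ξ) * (w / max |w| ξ) * φ else psih' 0 * |φ|

section Cohesive

variable {psih psih' : ℝ → ℝ}

theorem cohesive_of_le_abs {w ξ : ℝ} (h : ξ ≤ |w|) : cohesive psih psih' w ξ = psih |w| :=
  if_pos h

theorem cohesive_of_abs_lt {w ξ : ℝ} (h : |w| < ξ) :
    cohesive psih psih' w ξ = psih ξ - psih' ξ * ((ξ ^ 2 - w ^ 2) / (2 * ξ)) :=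
  if_neg h.not_ge

variable (hC1 : ∀ w ∈ Ici (0:ℝ), HasDerivWithinAt psih (psih' w) (Ici 0) w)
include hC1

theorem hasDerivAt_comp_abs {w : ℝ} (hw : w ≠ 0) :
    HasDerivAt (fun x => psih |x|) (psih' |w| * (w / |w|)) w := by
  have hpos : 0 < |w| := abs_pos.mpr hw
  have hd : HasDerivAt psih (psih' |w|) |w| := (hC1 _ hpos.le).hasDerivAt (Ici_mem_nhds hpos)
  have := hd.comp w (hasDerivAt_abs hw)
  rwa [sign_eq_div_abs hw] at this

theorem hasDerivAt_cohesive {w ξ : ℝ} (hm : 0 < max |w| ξ) :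
    HasDerivAt (fun x => cohesive psih psih' x ξ) (psih' (max |w| ξ) * (w / max |w| ξ)) w := by
  rcases lt_trichotomy ξ |w| with h | h | h
  · rw [max_eq_left h.le] at hm ⊢
    refine (hasDerivAt_comp_abs hC1 (abs_pos.mp hm)).congr_of_eventuallyEq ?_
    filter_upwards [(continuous_abs.tendsto w).eventually (eventually_gt_nhds h)] with x hx
    exact cohesive_of_le_abs hx.le
  · subst h
    rw [max_self] at hm ⊢
    exact HasDerivAt.ite_of_eq (fun x => |w| ≤ |x|) (hasDerivAt_comp_abs hC1 (abs_pos.mp hm))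
      (hasDerivAt_sub_mul_quadratic _ _ _ w hm.ne') (by simp [sq_abs])
  · rw [max_eq_right h.le] at hm ⊢
    refine (hasDerivAt_sub_mul_quadratic (psih ξ) _ ξ w hm.ne').congr_of_eventuallyEq ?_
    filter_upwards [(continuous_abs.tendsto w).eventually (eventually_lt_nhds h)] with x hx
    exact cohesive_of_abs_lt hx

theorem tendsto_cohesive_lineQuotient (φ : ℝ) {w ξ : ℝ} :
    Tendsto (fun t => (cohesive psih psih' (w + t * φ) ξ - cohesive psih psih' w ξ) / t)
      (𝓝[>] 0) (𝓝 (cohesiveDirDeriv psih' w ξ φ)) := by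
  refine HasDerivWithinAt.tendsto_lineQuotient_nhdsGT (f := fun x => cohesive psih psih' x ξ) ?_
  unfold cohesiveDirDeriv
  split_ifs with hm
  · have hline : HasDerivAt (fun t : ℝ => w + t * φ) φ 0 := by
      simpa using ((hasDerivAt_id (0 : ℝ)).mul_const φ).const_add w
    exact ((hasDerivAt_cohesive hC1 hm).comp_of_eq 0 hline (by simp)).hasDerivWithinAt
  · obtain ⟨hw, hξ⟩ := max_le_iff.mp (not_lt.mp hm)
    obtain rfl := abs_nonpos_iff.mp hw
    have hscale : HasDerivWithinAt (fun t : ℝ => t * |φ|) |φ| (Ici 0) 0 := by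
      simpa using ((hasDerivAt_id (0 : ℝ)).mul_const |φ|).hasDerivWithinAt
    refine ((hC1 0 self_mem_Ici).comp_of_eq 0 hscale
      (fun t (ht : 0 ≤ t) => mul_nonneg ht (abs_nonneg φ)) (by simp)).congr_of_mem
      (fun t (ht : 0 ≤ t) => ?_) self_mem_Ici
    rw [zero_add, cohesive_of_le_abs (hξ.trans (abs_nonneg _)), abs_mul, abs_of_nonneg ht]
    rfl

end Cohesive

theorem abs_cohesiveDirDeriv_le (psih' : ℝ → ℝ) (w ξ φ : ℝ) :
    |cohesiveDirDeriv psih' w ξ φ| ≤ |psih' (max |w| ξ)| * |φ| := by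
  unfold cohesiveDirDeriv
  split_ifs with hm
  · have hratio : |w / max |w| ξ| ≤ 1 := by
      rw [abs_div, abs_of_pos hm]
      exact (div_le_one hm).mpr (le_max_left _ _)
    calc |psih' (max |w| ξ) * (w / max |w| ξ) * φ|
        = |psih' (max |w| ξ)| * |w / max |w| ξ| * |φ| := by rw [abs_mul, abs_mul]
      _ ≤ |psih' (max |w| ξ)| * 1 * |φ| := by gcongr
      _ = |psih' (max |w| ξ)| * |φ| := by rw [mul_one]
  · rw [(not_lt.mp hm).antisymm (le_max_of_le_left (abs_nonneg w)), abs_mul, abs_abs]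

theorem continuous_cohesiveDirDeriv (psih' : ℝ → ℝ) (w ξ : ℝ) :
    Continuous (cohesiveDirDeriv psih' w ξ) := by
  unfold cohesiveDirDeriv
  split_ifs <;> fun_prop

theorem limsup_cohesiveDirDeriv_le {psih' : ℝ → ℝ} (hC1c : ContinuousOn psih' (Ici 0))
    (hψ'0 : 0 ≤ psih' 0) {ι : Type*} {l : Filter ι} [l.NeBot] {wn ξn : ι → ℝ} {w ξ : ℝ}
    (hw : Tendsto wn l (𝓝 w)) (hξ : Tendsto ξn l (𝓝 ξ)) (φ : ℝ) :
    limsup (fun n => cohesiveDirDeriv psih' (wn n) (ξn n) φ) l ≤ cohesiveDirDeriv psih' w ξ φ := by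
  have hmax : Tendsto (fun n => max |wn n| (ξn n)) l (𝓝 (max |w| ξ)) := hw.abs.max hξ
  by_cases hm : 0 < max |w| ξ
  · refine le_of_eq (Tendsto.limsup_eq ?_)
    rw [cohesiveDirDeriv, if_pos hm]
    have hcont : ContinuousAt psih' (max |w| ξ) := hC1c.continuousAt (Ici_mem_nhds hm)
    refine (((hcont.tendsto.comp hmax).mul (hw.div hmax hm.ne')).mul_const φ).congr' ?_
    filter_upwards [hmax.eventually (eventually_gt_nhds hm)] with n hn
    rw [cohesiveDirDeriv, if_pos hn]
    rfl
  · have hm0 : max |w| ξ = 0 := (not_lt.mp hm).antisymm (le_max_of_le_left (abs_nonneg w))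
    rw [cohesiveDirDeriv, if_neg hm]
    have hmax' : Tendsto (fun n => max |wn n| (ξn n)) l (𝓝[Ici 0] 0) :=
      tendsto_nhdsWithin_iff.mpr ⟨hm0 ▸ hmax,
        Eventually.of_forall fun n => mem_Ici.mpr (le_max_of_le_left (abs_nonneg _))⟩
    have hbound := ((hC1c 0 self_mem_Ici).tendsto.comp hmax').abs.mul_const |φ|
    rw [abs_of_nonneg hψ'0] at hbound
    exact limsup_le_of_abs_le_of_tendsto (fun n => abs_cohesiveDirDeriv_le _ _ _ _) hbound

theorem cohesive_directional_deriv_usc_general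
    (psih psih' : ℝ → ℝ)
    (hnn : ∀ w ≥ (0:ℝ), 0 ≤ psih w)
    (h0 : psih 0 = 0)
    (hC1 : ∀ w ∈ Set.Ici (0:ℝ), HasDerivWithinAt psih (psih' w) (Set.Ici 0) w)
    (hC1c : ContinuousOn psih' (Set.Ici 0)) :
    ∃ D : ℝ → ℝ → ℝ → ℝ,
      (∀ w ξ φ : ℝ, 0 ≤ ξ →
        Tendsto (fun h : ℝ =>
            (cohesive psih psih' (w + h * φ) ξ - cohesive psih psih' w ξ) / h)
          (nhdsWithin 0 (Set.Ioi 0)) (nhds (D w ξ φ))) ∧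
      (∀ (w ξ φ : ℝ) (wn ξn : ℕ → ℝ), 0 ≤ ξ → (∀ n, 0 ≤ ξn n) →
        Tendsto wn atTop (nhds w) → Tendsto ξn atTop (nhds ξ) →
        Filter.limsup (fun n => D (wn n) (ξn n) φ) atTop ≤ D w ξ φ) ∧
      (∀ (w ξ φ : ℝ) (φn : ℕ → ℝ), 0 ≤ ξ →
        Tendsto φn atTop (nhds φ) →
        Tendsto (fun n => D w ξ (φn n)) atTop (nhds (D w ξ φ))) := by
  have hψ'0 : 0 ≤ psih' 0 :=
    (hC1 0 self_mem_Ici).nonneg_of_isMinOn_Ici <| isMinOn_iff.mpr fun x hx => h0.symm ▸ hnn x hx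
  refine ⟨cohesiveDirDeriv psih', fun w ξ φ _ => tendsto_cohesive_lineQuotient hC1 φ,
    fun w ξ φ wn ξn _ _ hw hξ => limsup_cohesiveDirDeriv_le hC1c hψ'0 hw hξ φ,
    fun w ξ φ φn _ hφ => ((continuous_cohesiveDirDeriv psih' w ξ).tendsto φ).comp hφ⟩

/-- the one-sided directional derivative D(w,ξ;φ) of ψ(·,ξ) exists at every
(w,ξ) ∈ ℝ × [0,∞), is upper semicontinuous in (w,ξ), and continuous in φ. -/
theorem cohesive_directional_deriv_usc
    (ξc : ℝ) (hξc : 0 < ξc) (psih psih' psih'' : ℝ → ℝ)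
    (hnn : ∀ w ≥ (0:ℝ), 0 ≤ psih w)
    (hconc : ConcaveOn ℝ (Set.Ici 0) psih)
    (h0 : psih 0 = 0)
    (hpos : ∀ w > (0:ℝ), 0 < psih w)
    (hconst : ∀ w ≥ ξc, psih w = psih ξc)
    (hC1 : ∀ w ∈ Set.Ici (0:ℝ), HasDerivWithinAt psih (psih' w) (Set.Ici 0) w)
    (hC1c : ContinuousOn psih' (Set.Ici 0))
    (hC2 : ∀ w ∈ Set.Icc (0:ℝ) ξc, HasDerivWithinAt psih' (psih'' w) (Set.Icc 0 ξc) w)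
    (hC2c : ContinuousOn psih'' (Set.Icc 0 ξc)) :
    ∃ D : ℝ → ℝ → ℝ → ℝ,
      (∀ w ξ φ : ℝ, 0 ≤ ξ →
        Tendsto (fun h : ℝ =>
            (cohesive psih psih' (w + h * φ) ξ - cohesive psih psih' w ξ) / h)
          (nhdsWithin 0 (Set.Ioi 0)) (nhds (D w ξ φ))) ∧
      (∀ (w ξ φ : ℝ) (wn ξn : ℕ → ℝ), 0 ≤ ξ → (∀ n, 0 ≤ ξn n) →
        Tendsto wn atTop (nhds w) → Tendsto ξn atTop (nhds ξ) →
        Filter.limsup (fun n => D (wn n) (ξn n) φ) atTop ≤ D w ξ φ) ∧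
      (∀ (w ξ φ : ℝ) (φn : ℕ → ℝ), 0 ≤ ξ →
        Tendsto φn atTop (nhds φ) →
        Tendsto (fun n => D w ξ (φn n)) atTop (nhds (D w ξ φ))) :=
  cohesive_directional_deriv_usc_general psih psih' hnn h0 hC1 hC1c
end

section
/- Let H be a real Hilbert space, F : H → ℝ, and u, ζ ∈ H. Assume: (i) there exists c ≥ 0 such that the map w ↦ F(w) + c·‖w − u‖² is convex on H; (ii) for every φ ∈ H the one-sided directional derivative F'(u;φ) := lim_{h→0⁺} (F(u + hφ) − F(u))/h exists; (iii) whenever a sequence (φ_k) converges weakly to φ in H, one has liminf_{k→∞} (F'(u;φ_k) − ⟨ζ, φ_k⟩) ≥ F'(u;φ) − ⟨ζ, φ⟩. Then the following are equivalent: (a) ζ is a subderivative, i.e. F'(u;φ) ≥ ⟨ζ, φ⟩ for every φ ∈ H; (b) ζ belongs to the limiting subdifferential of F at u, i.e. liminf_{w→u, w≠u} (F(w) − F(u) − ⟨ζ, w − u⟩)/‖w − u‖ ≥ 0. -/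
/-!
Since `F + c‖· - u‖²` is convex, the difference quotients of `F` at `u` in the direction
`w - u` are bounded by `F w - F u + c‖w - u‖²`. For a subderivative `ζ` this gives
`F w - F u - ⟪ζ, w - u⟫ ≥ -c‖w - u‖²`, an error of order `o(‖w - u‖)`. Conversely, evaluating the
limiting-subgradient inequality along the ray `u + hφ` and letting `h → 0⁺` bounds `F'(u;φ)`
below by `⟪ζ, φ⟫`.
-/

open Filter Topology

section SemiconvexDifferenceQuotient

variable {E : Type*} [SeminormedAddCommGroup E] [NormedSpace ℝ E] {F : E → ℝ} {u φ : E} {c : ℝ}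

theorem difference_quotient_le_of_convexOn_add_sq (hc : 0 ≤ c)
    (hconv : ConvexOn ℝ Set.univ (fun w => F w + c * ‖w - u‖ ^ 2)) {h : ℝ} (h0 : 0 < h)
    (h1 : h ≤ 1) :
    (F (u + h • φ) - F u) / h ≤ F (u + φ) - F u + c * ‖φ‖ ^ 2 := by
  have hcv := hconv.2 (Set.mem_univ u) (Set.mem_univ (u + φ)) (sub_nonneg.2 h1) h0.le
    (sub_add_cancel 1 h)
  have hseg : (1 - h) • u + h • (u + φ) = u + h • φ := by module
  simp only [hseg, smul_eq_mul, add_sub_cancel_left, sub_self, norm_zero, norm_smul,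
    Real.norm_eq_abs, abs_of_pos h0] at hcv
  rw [div_le_iff₀ h0]
  nlinarith [mul_nonneg hc (sq_nonneg (h * ‖φ‖))]

theorem le_of_tendsto_difference_quotient_of_convexOn_add_sq (hc : 0 ≤ c)
    (hconv : ConvexOn ℝ Set.univ (fun w => F w + c * ‖w - u‖ ^ 2)) {d : ℝ}
    (hd : Tendsto (fun h : ℝ => (F (u + h • φ) - F u) / h) (𝓝[>] 0) (𝓝 d)) :
    d ≤ F (u + φ) - F u + c * ‖φ‖ ^ 2 :=
  le_of_tendsto hd <| by
    filter_upwards [Ioo_mem_nhdsGT one_pos] with h hh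
    exact difference_quotient_le_of_convexOn_add_sq hc hconv hh.1 hh.2.le

end SemiconvexDifferenceQuotient

section LimitingSubgradient

variable {E : Type*} [NormedAddCommGroup E] [InnerProductSpace ℝ E] {F : E → ℝ} {u ζ : E}

def IsLimitingSubgradient (F : E → ℝ) (u ζ : E) : Prop :=
  ∀ ε > (0 : ℝ), ∀ᶠ w in 𝓝[≠] u, -ε ≤ (F w - F u - inner ℝ ζ (w - u)) / ‖w - u‖

theorem isLimitingSubgradient_of_inner_le_add_sq {c : ℝ}
    (hF : ∀ w, inner ℝ ζ (w - u) ≤ F w - F u + c * ‖w - u‖ ^ 2) :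
    IsLimitingSubgradient F u ζ := by
  intro ε hε
  have hsmall : ∀ᶠ w in 𝓝[≠] u, c * ‖w - u‖ < ε := by
    have hcont : Continuous fun w => c * ‖w - u‖ := by fun_prop
    exact (hcont.tendsto' u 0 (by simp)).eventually (gt_mem_nhds hε) |>.filter_mono
      nhdsWithin_le_nhds
  filter_upwards [hsmall, self_mem_nhdsWithin] with w hw hne
  have hpos : 0 < ‖w - u‖ := norm_pos_iff.2 (sub_ne_zero.2 hne)
  rw [le_div_iff₀ hpos]
  nlinarith [hF w]

theorem tendsto_add_smul_nhdsNE {φ : E} (hφ : φ ≠ 0) :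
    Tendsto (fun h : ℝ => u + h • φ) (𝓝[>] 0) (𝓝[≠] u) := by
  refine tendsto_nhdsWithin_of_tendsto_nhds_of_eventually_within _ ?_ ?_
  · have hcont : Continuous fun h : ℝ => u + h • φ := by fun_prop
    simpa using (hcont.tendsto 0).mono_left nhdsWithin_le_nhds
  · filter_upwards [self_mem_nhdsWithin] with h (hh : 0 < h)
    simpa [hh.ne'] using hφ

theorem IsLimitingSubgradient.inner_le_of_tendsto (hF : IsLimitingSubgradient F u ζ) {φ : E}
    {d : ℝ} (hd : Tendsto (fun h : ℝ => (F (u + h • φ) - F u) / h) (𝓝[>] 0) (𝓝 d)) :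
    inner ℝ ζ φ ≤ d := by
  rcases eq_or_ne φ 0 with rfl | hφ
  · have hd0 : d = 0 := tendsto_nhds_unique hd (by simp)
    simp [hd0]
  have hnφ : 0 < ‖φ‖ := norm_pos_iff.2 hφ
  refine le_of_forall_pos_le_add fun ε hε => sub_le_iff_le_add.1 (ge_of_tendsto hd ?_)
  filter_upwards [(tendsto_add_smul_nhdsNE hφ).eventually (hF (ε / ‖φ‖) (by positivity)),
    self_mem_nhdsWithin] with h hh (h0 : 0 < h)
  simp only [add_sub_cancel_left, norm_smul, Real.norm_eq_abs, abs_of_pos h0,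
    inner_smul_right] at hh
  rw [le_div_iff₀ (by positivity), mul_left_comm, neg_mul, div_mul_cancel₀ _ hnφ.ne'] at hh
  rw [le_div_iff₀ h0]
  nlinarith

end LimitingSubgradient

theorem subderivative_iff_limiting_subdifferential_general
    {H : Type*} [NormedAddCommGroup H] [InnerProductSpace ℝ H]
    (F : H → ℝ) (u ζ : H) (DF : H → ℝ)
    (hconv : ∃ c : ℝ, 0 ≤ c ∧ ConvexOn ℝ Set.univ (fun w => F w + c * ‖w - u‖ ^ 2))
    (hDF : ∀ φ : H,
      Tendsto (fun h : ℝ => (F (u + h • φ) - F u) / h)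
        (nhdsWithin 0 (Set.Ioi 0)) (nhds (DF φ))) :
    (∀ φ : H, (inner ℝ ζ φ : ℝ) ≤ DF φ) ↔
      (∀ ε > (0:ℝ), ∀ᶠ w in nhdsWithin u {u}ᶜ,
        -ε ≤ (F w - F u - (inner ℝ ζ (w - u) : ℝ)) / ‖w - u‖) := by
  obtain ⟨c, hc, hG⟩ := hconv
  change _ ↔ IsLimitingSubgradient F u ζ
  refine ⟨fun hsub => isLimitingSubgradient_of_inner_le_add_sq (c := c) fun w => ?_,
    fun hlim φ => hlim.inner_le_of_tendsto (hDF φ)⟩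
  calc inner ℝ ζ (w - u) ≤ DF (w - u) := hsub _
    _ ≤ F (u + (w - u)) - F u + c * ‖w - u‖ ^ 2 :=
      le_of_tendsto_difference_quotient_of_convexOn_add_sq hc hG (hDF _)
    _ = F w - F u + c * ‖w - u‖ ^ 2 := by rw [add_sub_cancel]

/-- in a real Hilbert space, for a λ-convex functional F whose directional
derivatives at u exist and satisfy a weak sequential lower semicontinuity property,
ζ is a subderivative (F'(u;φ) ≥ ⟨ζ,φ⟩ for all φ) if and only if ζ belongs to the
limiting subdifferential of F at u. -/
theorem subderivative_iff_limiting_subdifferential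
    {H : Type*} [NormedAddCommGroup H] [InnerProductSpace ℝ H] [CompleteSpace H]
    (F : H → ℝ) (u ζ : H) (DF : H → ℝ)
    (hconv : ∃ c : ℝ, 0 ≤ c ∧ ConvexOn ℝ Set.univ (fun w => F w + c * ‖w - u‖ ^ 2))
    (hDF : ∀ φ : H,
      Tendsto (fun h : ℝ => (F (u + h • φ) - F u) / h)
        (nhdsWithin 0 (Set.Ioi 0)) (nhds (DF φ)))
    (hwlsc : ∀ (φk : ℕ → H) (φ : H),
      (∀ y : H, Tendsto (fun k => (inner ℝ (φk k) y : ℝ)) atTop (nhds (inner ℝ φ y))) →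
      ∀ ε > (0:ℝ), ∀ᶠ k in atTop,
        DF φ - (inner ℝ ζ φ : ℝ) - ε ≤ DF (φk k) - (inner ℝ ζ (φk k) : ℝ)) :
    (∀ φ : H, (inner ℝ ζ φ : ℝ) ≤ DF φ) ↔
      (∀ ε > (0:ℝ), ∀ᶠ w in nhdsWithin u {u}ᶜ,
        -ε ≤ (F w - F u - (inner ℝ ζ (w - u) : ℝ)) / ‖w - u‖) :=
  subderivative_iff_limiting_subdifferential_general F u ζ DF hconv hDF
end

section
/- Let α > 0 and ξ_c > 0. Suppose ψ̂ : (0,ξ_c] → ℝ is differentiable and satisfies the equation ψ̂(ξ) − (1/2)·ψ̂'(ξ)·ξ = α·ξ for every ξ ∈ (0,ξ_c], together with the boundary condition ψ̂'(ξ_c) = 0. Then ψ̂(ξ) = α·ξ·(2 − ξ/ξ_c) for every ξ ∈ (0,ξ_c]. -/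
/-! The difference `g = ψ̂ - αξ(2 - ξ/ξ_c)` solves the homogeneous Euler equation `ξ g' = 2 g`, so
`g(ξ)/ξ²` has zero derivative and is constant on `(0, ξ_c]`. The boundary condition makes
`ψ̂(ξ_c) = αξ_c`, i.e. `g(ξ_c) = 0`, hence `g` vanishes identically. -/

open Set

theorem Convex.eq_of_hasDerivWithinAt_zero {𝕜 G : Type*} [RCLike 𝕜] [NormedAddCommGroup G]
    [NormedSpace 𝕜 G] {f : 𝕜 → G} {s : Set 𝕜} (hs : Convex ℝ s)
    (hf : ∀ x ∈ s, HasDerivWithinAt f 0 s x) {x y : 𝕜} (hx : x ∈ s) (hy : y ∈ s) :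
    f x = f y := by
  have h := hs.norm_image_sub_le_of_norm_hasDerivWithin_le hf (C := 0) (by simp) hy hx
  rwa [zero_mul, norm_le_zero_iff, sub_eq_zero] at h

theorem hasDerivWithinAt_div_sq_zero_of_mul_eq_two_mul {g : ℝ → ℝ} {g' : ℝ} {s : Set ℝ} {x : ℝ}
    (hx : x ≠ 0) (hg : HasDerivWithinAt g g' s x) (heuler : g' * x = 2 * g x) :
    HasDerivWithinAt (fun y => g y / y ^ 2) 0 s x := by
  refine (hg.div (hasDerivWithinAt_pow 2 x) (pow_ne_zero 2 hx)).congr_deriv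
    (div_eq_zero_iff.mpr (Or.inl ?_))
  push_cast
  linear_combination x * heuler

theorem Convex.div_sq_eq_of_mul_deriv_eq_two_mul {g g' : ℝ → ℝ} {s : Set ℝ} (hs : Convex ℝ s)
    (h0 : (0 : ℝ) ∉ s) (hg : ∀ x ∈ s, HasDerivWithinAt g (g' x) s x)
    (heuler : ∀ x ∈ s, g' x * x = 2 * g x) {x y : ℝ} (hx : x ∈ s) (hy : y ∈ s) :
    g x / x ^ 2 = g y / y ^ 2 :=
  hs.eq_of_hasDerivWithinAt_zero (fun z hz => hasDerivWithinAt_div_sq_zero_of_mul_eq_two_mul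
    (ne_of_mem_of_not_mem hz h0) (hg z hz) (heuler z hz)) hx hy

theorem linear_dissipation_forces_quadratic_profile_general
    (α ξc : ℝ)
    (psih psih' : ℝ → ℝ)
    (hder : ∀ ξ ∈ Set.Ioc (0:ℝ) ξc, HasDerivWithinAt psih (psih' ξ) (Set.Ioc 0 ξc) ξ)
    (hode : ∀ ξ ∈ Set.Ioc (0:ℝ) ξc, psih ξ - 1 / 2 * psih' ξ * ξ = α * ξ)
    (hbc : psih' ξc = 0) :
    ∀ ξ ∈ Set.Ioc (0:ℝ) ξc, psih ξ = α * ξ * (2 - ξ / ξc) := by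
  intro ξ hξ
  have hξc : ξc ∈ Ioc 0 ξc := ⟨hξ.1.trans_le hξ.2, le_rfl⟩
  set g := fun x => psih x - α * x * (2 - x / ξc)
  have hprofile (x : ℝ) : HasDerivAt (fun x => α * x * (2 - x / ξc)) (2 * α * (1 - x / ξc)) x := by
    refine (((hasDerivAt_id' x).const_mul α).mul
      (((hasDerivAt_id' x).div_const ξc).const_sub 2)).congr_deriv ?_
    ring
  have heuler (x : ℝ) (hx : x ∈ Ioc 0 ξc) : (psih' x - 2 * α * (1 - x / ξc)) * x = 2 * g x := by
    linear_combination (-2) * hode x hx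
  have hgc : g ξc = 0 := by
    have hψc := hode ξc hξc
    rw [hbc, mul_zero, zero_mul, sub_zero] at hψc
    simp only [g, hψc, div_self hξc.1.ne']
    ring
  have hquot := (convex_Ioc 0 ξc).div_sq_eq_of_mul_deriv_eq_two_mul (g := g) (fun h => h.1.false)
    (fun x hx => (hder x hx).sub (hprofile x).hasDerivWithinAt) heuler hξ hξc
  rw [hgc, zero_div, div_eq_zero_iff, or_iff_left (pow_ne_zero 2 hξ.1.ne')] at hquot
  exact sub_eq_zero.mp hquot

/-- if ψ̂ is differentiable on (0,ξ_c] and satisfies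
ψ̂(ξ) − (1/2)ψ̂'(ξ)ξ = αξ there, with ψ̂'(ξ_c) = 0, then
ψ̂(ξ) = αξ(2 − ξ/ξ_c) on (0,ξ_c]. -/
theorem linear_dissipation_forces_quadratic_profile
    (α ξc : ℝ) (hα : 0 < α) (hξc : 0 < ξc)
    (psih psih' : ℝ → ℝ)
    (hder : ∀ ξ ∈ Set.Ioc (0:ℝ) ξc, HasDerivWithinAt psih (psih' ξ) (Set.Ioc 0 ξc) ξ)
    (hode : ∀ ξ ∈ Set.Ioc (0:ℝ) ξc, psih ξ - 1 / 2 * psih' ξ * ξ = α * ξ)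
    (hbc : psih' ξc = 0) :
    ∀ ξ ∈ Set.Ioc (0:ℝ) ξc, psih ξ = α * ξ * (2 - ξ / ξc) :=
  linear_dissipation_forces_quadratic_profile_general α ξc psih psih' hder hode hbc
end

section
/- Assume (H1) and (H2), set β := −min{ψ̂''(w) : w ∈ [0,ξ_c]}, and for ξ > 0 set c_ξ := ψ̂'(ξ)/ξ. Let 0 < ξ₁ ≤ ξ₂ and w₁, w₂ ∈ ℝ satisfy |w₁| ≤ ξ₁, |w₂| ≤ ξ₂ and w₁ ≠ w₂, and assume that |w₂| = ξ₂ whenever ξ₁ < ξ₂. Then −β ≤ (c_{ξ₂}·w₂ − c_{ξ₁}·w₁)/(w₂ − w₁) ≤ c_{ξ₁}. -/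
open Set

/-!
A concave `ψ̂` has an antitone derivative, which vanishes from `ξ_c` on because `ψ̂` is constant
there; hence `ψ̂' ≥ 0`. The lower bound `ψ̂'' ≥ -β` makes `ψ̂'(ξ) + β ξ` monotone on `[0, ξ_c]`,
and, as `β ≥ 0` (the derivative of an antitone function is nonpositive), on all of `[0, ∞)`.
For `ξ₁ = ξ₂` the incremental stiffness is `c_{ξ₁} ≥ 0`. Otherwise, after the symmetry
`w ↦ -w` we may take `w₂ = ξ₂`, and both bounds reduce to
`ψ̂'(ξ₁) - β (ξ₂ - ξ₁) ≤ ψ̂'(ξ₂) ≤ ψ̂'(ξ₁)` together with `w₁ ≤ ξ₁ < ξ₂`.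
-/

lemma ConcaveOn.antitoneOn_of_hasDerivWithinAt_s15 {S : Set ℝ} {f f' : ℝ → ℝ}
    (hfc : ConcaveOn ℝ S f) (hd : ∀ x ∈ S, HasDerivWithinAt f (f' x) S x) :
    AntitoneOn f' S := by
  intro x hx y hy hxy
  rcases hxy.eq_or_lt with rfl | hlt
  · exact le_rfl
  exact (hfc.le_slope_of_hasDerivWithinAt hx hy hlt (hd y hy)).trans
    (hfc.slope_le_of_hasDerivWithinAt hx hy hlt (hd x hx))

lemma HasDerivWithinAt.eq_zero_of_forall_ge_eq_s15 {f : ℝ → ℝ} {d y : ℝ}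
    (hd : HasDerivWithinAt f d (Ici y) y) (hf : ∀ w ≥ y, f w = f y) : d = 0 :=
  (uniqueDiffWithinAt_Ici y).eq_deriv _ hd
    ((hasDerivWithinAt_const y _ (f y)).congr_of_mem hf self_mem_Ici)

lemma monotoneOn_add_mul_of_hasDerivWithinAt {D : Set ℝ} (hD : Convex ℝ D) {g g' : ℝ → ℝ}
    {β : ℝ} (hd : ∀ x ∈ D, HasDerivWithinAt g (g' x) D x) (hlow : ∀ x ∈ D, -β ≤ g' x) :
    MonotoneOn (fun x => g x + β * x) D := by
  have hlin (x : ℝ) : HasDerivAt (fun x => β * x) β x := by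
    simpa using (hasDerivAt_id x).const_mul β
  refine monotoneOn_of_hasDerivWithinAt_nonneg (f' := fun x => g' x + β) hD
    (fun x hx => (hd x hx).continuousWithinAt.add (hlin x).continuousAt.continuousWithinAt)
    (fun x hx => ((hd x (interior_subset hx)).mono interior_subset).add (hlin x).hasDerivWithinAt)
    (fun x hx => ?_)
  linarith [hlow x (interior_subset hx)]

lemma MonotoneOn.add_mul_Ici_of_eq_zero {g : ℝ → ℝ} {β a b : ℝ} (hβ : 0 ≤ β) (hab : a ≤ b)
    (hg : MonotoneOn (fun x => g x + β * x) (Icc a b)) (hzero : ∀ x ≥ b, g x = 0) :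
    MonotoneOn (fun x => g x + β * x) (Ici a) := by
  have hright : MonotoneOn (fun x => g x + β * x) (Ici b) := by
    intro x hx y hy hxy
    simp only [hzero x hx, hzero y hy, zero_add]
    exact mul_le_mul_of_nonneg_left hxy hβ
  rw [← Icc_union_Ici_eq_Ici hab]
  exact hg.union_right hright (isGreatest_Icc hab) isLeast_Ici

lemma secant_mem_Icc_of_right_eq {d₁ d₂ β ξ₁ ξ₂ w₁ : ℝ} (hβ : 0 ≤ β) (hξ₁ : 0 < ξ₁)
    (hξ₁₂ : ξ₁ < ξ₂) (hd₁ : 0 ≤ d₁) (hd₂₁ : d₂ ≤ d₁) (hd₁₂ : d₁ - d₂ ≤ β * (ξ₂ - ξ₁))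
    (hw₁ : w₁ ≤ ξ₁) :
    (d₂ / ξ₂ * ξ₂ - d₁ / ξ₁ * w₁) / (ξ₂ - w₁) ∈ Icc (-β) (d₁ / ξ₁) := by
  have hc₁ : 0 ≤ d₁ / ξ₁ := div_nonneg hd₁ hξ₁.le
  have hden : 0 < ξ₂ - w₁ := by linarith
  have hc₁w₁ : d₁ / ξ₁ * w₁ ≤ d₁ := by
    simpa [div_mul_cancel₀ d₁ hξ₁.ne'] using mul_le_mul_of_nonneg_left hw₁ hc₁
  have hd₂ : d₂ ≤ d₁ / ξ₁ * ξ₂ :=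
    calc d₂ ≤ d₁ / ξ₁ * ξ₁ := by rwa [div_mul_cancel₀ d₁ hξ₁.ne']
      _ ≤ d₁ / ξ₁ * ξ₂ := mul_le_mul_of_nonneg_left hξ₁₂.le hc₁
  rw [div_mul_cancel₀ d₂ (hξ₁.trans hξ₁₂).ne', mem_Icc, le_div_iff₀ hden, div_le_iff₀ hden]
  constructor <;> nlinarith

lemma secant_mem_Icc_of_abs_eq {d₁ d₂ β ξ₁ ξ₂ w₁ w₂ : ℝ} (hβ : 0 ≤ β) (hξ₁ : 0 < ξ₁)
    (hξ₁₂ : ξ₁ < ξ₂) (hd₁ : 0 ≤ d₁) (hd₂₁ : d₂ ≤ d₁) (hd₁₂ : d₁ - d₂ ≤ β * (ξ₂ - ξ₁))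
    (hw₁ : |w₁| ≤ ξ₁) (hw₂ : |w₂| = ξ₂) :
    (d₂ / ξ₂ * w₂ - d₁ / ξ₁ * w₁) / (w₂ - w₁) ∈ Icc (-β) (d₁ / ξ₁) := by
  obtain ⟨hw₁_ge, hw₁_le⟩ := abs_le.1 hw₁
  rcases (abs_eq (hξ₁.trans hξ₁₂).le).1 hw₂ with rfl | rfl
  · exact secant_mem_Icc_of_right_eq hβ hξ₁ hξ₁₂ hd₁ hd₂₁ hd₁₂ hw₁_le
  · convert secant_mem_Icc_of_right_eq hβ hξ₁ hξ₁₂ hd₁ hd₂₁ hd₁₂ (w₁ := -w₁) (by linarith)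
      using 1
    rw [← neg_div_neg_eq]
    congr 1 <;> ring

theorem incremental_stiffness_bounds_general
    (ξc : ℝ) (hξc : 0 < ξc) (psih psih' psih'' : ℝ → ℝ)
    (hconc : ConcaveOn ℝ (Set.Ici 0) psih)
    (hconst : ∀ w ≥ ξc, psih w = psih ξc)
    (hC1 : ∀ w ∈ Set.Ici (0:ℝ), HasDerivWithinAt psih (psih' w) (Set.Ici 0) w)
    (hC2 : ∀ w ∈ Set.Icc (0:ℝ) ξc, HasDerivWithinAt psih' (psih'' w) (Set.Icc 0 ξc) w)
    (β : ℝ) (hβ : IsLeast (psih'' '' Set.Icc 0 ξc) (-β))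
    (ξ₁ ξ₂ w₁ w₂ : ℝ) (hξ₁ : 0 < ξ₁) (hξ₁₂ : ξ₁ ≤ ξ₂)
    (hw₁ : |w₁| ≤ ξ₁) (hne : w₁ ≠ w₂)
    (hcase : ξ₁ < ξ₂ → |w₂| = ξ₂) :
    -β ≤ (psih' ξ₂ / ξ₂ * w₂ - psih' ξ₁ / ξ₁ * w₁) / (w₂ - w₁) ∧
    (psih' ξ₂ / ξ₂ * w₂ - psih' ξ₁ / ξ₁ * w₁) / (w₂ - w₁) ≤ psih' ξ₁ / ξ₁ := by
  have hanti : AntitoneOn psih' (Ici 0) := hconc.antitoneOn_of_hasDerivWithinAt_s15 hC1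
  have hzero : ∀ y ≥ ξc, psih' y = 0 := fun y hy =>
    ((hC1 y (hξc.le.trans hy)).mono (Ici_subset_Ici.2 (hξc.le.trans hy))).eq_zero_of_forall_ge_eq_s15
      fun w hw => (hconst w (hy.trans hw)).trans (hconst y hy).symm
  have hnonneg : ∀ x ≥ 0, 0 ≤ psih' x := fun x hx =>
    hzero _ (le_max_right x ξc) ▸ hanti hx (le_max_of_le_left hx) (le_max_left x ξc)
  have h0 : (0 : ℝ) ∈ Icc 0 ξc := left_mem_Icc.2 hξc.le
  have hβ0 : 0 ≤ β := by
    have := (hC2 0 h0).nonpos_of_antitoneOn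
      (uniqueDiffWithinAt_iff_accPt.1 (uniqueDiffOn_Icc hξc 0 h0)) (hanti.mono Icc_subset_Ici_self)
    linarith [hβ.2 ⟨0, h0, rfl⟩]
  have hmono : MonotoneOn (fun x => psih' x + β * x) (Ici 0) :=
    (monotoneOn_add_mul_of_hasDerivWithinAt (convex_Icc 0 ξc) hC2
      fun w hw => hβ.2 ⟨w, hw, rfl⟩).add_mul_Ici_of_eq_zero hβ0 hξc.le hzero
  rcases hξ₁₂.lt_or_eq with hlt | rfl
  · have hξ₂ : ξ₂ ∈ Ici 0 := (hξ₁.trans hlt).le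
    have hlip := hmono hξ₁.le hξ₂ hξ₁₂
    exact secant_mem_Icc_of_abs_eq hβ0 hξ₁ hlt (hnonneg ξ₁ hξ₁.le) (hanti hξ₁.le hξ₂ hξ₁₂)
      (by simp only at hlip; linarith) hw₁ (hcase hlt)
  · rw [← mul_sub, mul_div_cancel_right₀ _ (sub_ne_zero.2 hne.symm)]
    exact ⟨by linarith [div_nonneg (hnonneg ξ₁ hξ₁.le) hξ₁.le], le_rfl⟩

/-- bounds on the incremental cohesive stiffness
α = (c_{ξ₂}w₂ − c_{ξ₁}w₁)/(w₂ − w₁), where c_ξ = ψ̂'(ξ)/ξ: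
under (H1), (H2), with 0 < ξ₁ ≤ ξ₂, |w₁| ≤ ξ₁, |w₂| ≤ ξ₂, w₁ ≠ w₂ and
|w₂| = ξ₂ whenever ξ₁ < ξ₂, one has −β ≤ α ≤ c_{ξ₁}. -/
theorem incremental_stiffness_bounds
    (ξc : ℝ) (hξc : 0 < ξc) (psih psih' psih'' : ℝ → ℝ)
    (hnn : ∀ w ≥ (0:ℝ), 0 ≤ psih w)
    (hconc : ConcaveOn ℝ (Set.Ici 0) psih)
    (h0 : psih 0 = 0)
    (hpos : ∀ w > (0:ℝ), 0 < psih w)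
    (hconst : ∀ w ≥ ξc, psih w = psih ξc)
    (hC1 : ∀ w ∈ Set.Ici (0:ℝ), HasDerivWithinAt psih (psih' w) (Set.Ici 0) w)
    (hC1c : ContinuousOn psih' (Set.Ici 0))
    (hC2 : ∀ w ∈ Set.Icc (0:ℝ) ξc, HasDerivWithinAt psih' (psih'' w) (Set.Icc 0 ξc) w)
    (hC2c : ContinuousOn psih'' (Set.Icc 0 ξc))
    (β : ℝ) (hβ : IsLeast (psih'' '' Set.Icc 0 ξc) (-β))
    (ξ₁ ξ₂ w₁ w₂ : ℝ) (hξ₁ : 0 < ξ₁) (hξ₁₂ : ξ₁ ≤ ξ₂)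
    (hw₁ : |w₁| ≤ ξ₁) (hw₂ : |w₂| ≤ ξ₂) (hne : w₁ ≠ w₂)
    (hcase : ξ₁ < ξ₂ → |w₂| = ξ₂) :
    -β ≤ (psih' ξ₂ / ξ₂ * w₂ - psih' ξ₁ / ξ₁ * w₁) / (w₂ - w₁) ∧
    (psih' ξ₂ / ξ₂ * w₂ - psih' ξ₁ / ξ₁ * w₁) / (w₂ - w₁) ≤ psih' ξ₁ / ξ₁ :=
  incremental_stiffness_bounds_general ξc hξc psih psih' psih'' hconc hconst hC1 hC2 β hβ ξ₁ ξ₂ w₁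
    w₂ hξ₁ hξ₁₂ hw₁ hne hcase
end

section
/- Let c_η > 0, β > 0, c̄ ≥ 0 and let τ be a real number with 0 < τ < c_η/(β + c̄). Let α₁, α₂ ∈ ℝ with −β ≤ α₁ ≤ c̄ and −β ≤ α₂ ≤ c̄, and let v₁, v₂ ∈ ℝ. Assume that α₁ ≥ α₂ or v₁·v₂ ≤ 0. Then c_η·(v₂ − v₁)² + τ·α₂·v₂·(v₂ − v₁) ≥ (τ/2)·α₂·v₂² − (τ/2)·α₁·v₁². -/
/-!
Writing `d = v₂ - v₁`, the gap between the two sides equals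
`(c_η + τα₂/2) d² + (τ/2)(α₁ - α₂) v₁² = (c_η + τα₂/2)(d² - v₁²) + (c_η + τα₁/2) v₁²`.
The step-size condition gives `τβ < c_η`, so both coefficients `c_η + τα/2` are nonnegative for
`α ≥ -β`. The first form is then a sum of nonnegative terms when `α₂ ≤ α₁`, the second one when
`v₁ v₂ ≤ 0`, since then `d² - v₁² = v₂² - 2 v₁ v₂ ≥ 0`.
-/

lemma velocity_jump_gap_eq (c τ α₁ α₂ v₁ v₂ : ℝ) :
    c * (v₂ - v₁) ^ 2 + τ * α₂ * v₂ * (v₂ - v₁) - (τ / 2 * α₂ * v₂ ^ 2 - τ / 2 * α₁ * v₁ ^ 2) =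
      (c + τ / 2 * α₂) * (v₂ - v₁) ^ 2 + τ / 2 * (α₁ - α₂) * v₁ ^ 2 := by
  ring

lemma velocity_jump_gap_eq' (c τ α₁ α₂ v₁ v₂ : ℝ) :
    c * (v₂ - v₁) ^ 2 + τ * α₂ * v₂ * (v₂ - v₁) - (τ / 2 * α₂ * v₂ ^ 2 - τ / 2 * α₁ * v₁ ^ 2) =
      (c + τ / 2 * α₂) * ((v₂ - v₁) ^ 2 - v₁ ^ 2) + (c + τ / 2 * α₁) * v₁ ^ 2 := by
  ring

lemma mul_lt_of_lt_div_add {τ β γ c : ℝ} (hβ : 0 < β) (hγ : 0 ≤ γ) (hτ0 : 0 ≤ τ)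
    (hτ : τ < c / (β + γ)) : τ * β < c := by
  have : τ * (β + γ) < c := (lt_div_iff₀ (by linarith)).mp hτ
  nlinarith [mul_nonneg hτ0 hγ]

lemma add_half_mul_nonneg {c τ β α : ℝ} (hτ0 : 0 ≤ τ) (hτβ : τ * β ≤ 2 * c) (hα : -β ≤ α) :
    0 ≤ c + τ / 2 * α := by
  nlinarith [mul_le_mul_of_nonneg_left hα hτ0]

lemma sq_le_sq_sub_of_mul_nonpos {v₁ v₂ : ℝ} (h : v₁ * v₂ ≤ 0) : v₁ ^ 2 ≤ (v₂ - v₁) ^ 2 := by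
  nlinarith [sq_nonneg v₂]

theorem discrete_velocity_jump_inequality_general
    (cη β cbar τ α₁ α₂ v₁ v₂ : ℝ)
    (hβ : 0 < β) (hcbar : 0 ≤ cbar)
    (hτ0 : 0 < τ) (hτ : τ < cη / (β + cbar))
    (hα₁l : -β ≤ α₁)
    (hα₂l : -β ≤ α₂)
    (hcase : α₂ ≤ α₁ ∨ v₁ * v₂ ≤ 0) :
    τ / 2 * α₂ * v₂ ^ 2 - τ / 2 * α₁ * v₁ ^ 2 ≤
      cη * (v₂ - v₁) ^ 2 + τ * α₂ * v₂ * (v₂ - v₁) := by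
  have hτβ : τ * β ≤ 2 * cη := by linarith [mul_lt_of_lt_div_add hβ hcbar hτ0.le hτ, mul_pos hτ0 hβ]
  have hc₁ := add_half_mul_nonneg hτ0.le hτβ hα₁l
  have hc₂ := add_half_mul_nonneg hτ0.le hτβ hα₂l
  rw [← sub_nonneg]
  rcases hcase with hα | hv
  · rw [velocity_jump_gap_eq]
    have hα' : 0 ≤ τ / 2 * (α₁ - α₂) := mul_nonneg (by positivity) (sub_nonneg.2 hα)
    exact add_nonneg (mul_nonneg hc₂ (sq_nonneg _)) (mul_nonneg hα' (sq_nonneg _))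
  · rw [velocity_jump_gap_eq']
    have hv' : 0 ≤ (v₂ - v₁) ^ 2 - v₁ ^ 2 := sub_nonneg.2 (sq_le_sq_sub_of_mul_nonpos hv)
    exact add_nonneg (mul_nonneg hc₂ hv') (mul_nonneg hc₁ (sq_nonneg _))

/-- the scalar algebraic inequality underlying the discrete energy estimate:
for 0 < τ < c_η/(β + c̄), −β ≤ α₁, α₂ ≤ c̄, and α₁ ≥ α₂ or v₁v₂ ≤ 0,
c_η(v₂ − v₁)² + τα₂v₂(v₂ − v₁) ≥ (τ/2)α₂v₂² − (τ/2)α₁v₁². -/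
theorem discrete_velocity_jump_inequality
    (cη β cbar τ α₁ α₂ v₁ v₂ : ℝ)
    (hcη : 0 < cη) (hβ : 0 < β) (hcbar : 0 ≤ cbar)
    (hτ0 : 0 < τ) (hτ : τ < cη / (β + cbar))
    (hα₁l : -β ≤ α₁) (hα₁u : α₁ ≤ cbar)
    (hα₂l : -β ≤ α₂) (hα₂u : α₂ ≤ cbar)
    (hcase : α₂ ≤ α₁ ∨ v₁ * v₂ ≤ 0) :
    τ / 2 * α₂ * v₂ ^ 2 - τ / 2 * α₁ * v₁ ^ 2 ≤
      cη * (v₂ - v₁) ^ 2 + τ * α₂ * v₂ * (v₂ - v₁) :=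
  discrete_velocity_jump_inequality_general cη β cbar τ α₁ α₂ v₁ v₂ hβ hcbar hτ0 hτ hα₁l hα₂l hcase
end

section
/- Assume (H1) and (H2) and let ψ be the cohesive density. Let w, ξ : ℝ → ℝ be functions with ξ(s) ≥ 0 and |w(s)| ≤ ξ(s) for all s ∈ ℝ, and with ξ nondecreasing. Let t ∈ ℝ and let w', ξ' ∈ ℝ be such that (w(t+h) − w(t))/h → w' and (ξ(t+h) − ξ(t))/h → ξ' as h → 0⁺. Assume the Karush–Kuhn–Tucker condition ξ'·(ξ(t) − |w(t)|) = 0, and assume that ξ' = |w'| in case ξ(t) = 0. Then the limit lim_{h→0⁺} (ψ(w(t+h), ξ(t+h)) − ψ(w(t), ξ(t)))/h exists and equals: ψ̂'(0)·|w'| if ξ(t) = 0; (ψ̂'(ξ(t))/ξ(t))·w(t)·w' if |w(t)| < ξ(t); and ψ̂'(ξ(t))·sign(w(t))·w' if |w(t)| = ξ(t) > 0. -/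
/-
On the cone `|w| ≤ ξ` the density is `ψ̂(ξ) − ψ̂'(ξ)·(ξ² − w²)/(2ξ)` (the two branches agree on
`|w| = ξ`), and an evolution starting at `t` stays in the cone with `ξ ≥ ξ(t)`. Reading the
difference quotients as right derivatives on `[t, ∞)`:

* if `ξ(t) > 0`, the density along the evolution is a smooth expression in `(w, ξ)`, whose one-sided
  derivative is given by the chain rule; the KKT condition kills the `ξ'` term (`ξ' = 0` inside
  the cone, and its coefficient vanishes on `|w| = ξ`). When `ξ(t) ≥ ξ_c`, `ψ̂'` is identically `0`
  to the right of `ξ(t)`, so `ψ̂''` is not needed there;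
* if `ξ(t) = 0`, the density differs from `ψ̂(ξ)` by at most `|ψ̂'(ξ)|·(ξ − |w|)`, and the gap
  `ξ − |w|` vanishes to first order at `t` because `ξ' = |w'|`.
-/

open Filter

open Set Topology Asymptotics

theorem Real.sign_mul_abs (r : ℝ) : Real.sign r * |r| = r := by
  rcases lt_trichotomy r 0 with hr | rfl | hr
  · simp [Real.sign_of_neg hr, abs_of_neg hr]
  · simp
  · simp [Real.sign_of_pos hr, abs_of_pos hr]

theorem hasDerivWithinAt_Ici_iff_tendsto_slope_zero_right {f : ℝ → ℝ} {f' t : ℝ} :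
    HasDerivWithinAt f f' (Ici t) t ↔
      Tendsto (fun h => (f (t + h) - f t) / h) (𝓝[>] 0) (𝓝 f') := by
  have hshift : 𝓝[>] t = map (t + ·) (𝓝[>] 0) := by simp
  rw [hasDerivWithinAt_iff_tendsto_slope, Ici_sdiff_left, hshift, tendsto_map'_iff]
  simp [Function.comp_def, slope_def_field]

theorem HasDerivWithinAt.abs_Ici_of_eq_zero {f : ℝ → ℝ} {f' t : ℝ}
    (hf : HasDerivWithinAt f f' (Ici t) t) (h0 : f t = 0) :
    HasDerivWithinAt (fun s => |f s|) |f'| (Ici t) t := by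
  rw [hasDerivWithinAt_iff_tendsto_slope, Ici_sdiff_left] at hf ⊢
  refine hf.abs.congr' ?_
  filter_upwards [self_mem_nhdsWithin] with s hs
  simp [slope_def_field, h0, abs_div, abs_of_pos (sub_pos.2 (mem_Ioi.1 hs))]

theorem HasDerivWithinAt.eq_zero_of_eqOn_Ici {f : ℝ → ℝ} {f' x : ℝ}
    (hf : HasDerivWithinAt f f' (Ici x) x) (hc : ∀ y ∈ Ici x, f y = f x) : f' = 0 :=
  (uniqueDiffWithinAt_Ici x).eq_deriv _ hf ((hasDerivWithinAt_const x _ (f x)).congr hc rfl)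

theorem exists_hasDerivWithinAt_Ici_of_eq_const {f f' f'' : ℝ → ℝ} {ξc b : ℝ} (hb : 0 < b)
    (hconst : ∀ s ≥ ξc, f s = f ξc)
    (hf : ∀ s ∈ Ici (0 : ℝ), HasDerivWithinAt f (f' s) (Ici 0) s)
    (hf' : ∀ s ∈ Icc 0 ξc, HasDerivWithinAt f' (f'' s) (Icc 0 ξc) s) :
    ∃ d, HasDerivWithinAt f' d (Ici b) b := by
  by_cases hbξ : b < ξc
  · exact ⟨f'' b, ((hf' b ⟨hb.le, hbξ.le⟩).hasDerivAt (Icc_mem_nhds hb hbξ)).hasDerivWithinAt⟩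
  · have hξb : ξc ≤ b := not_lt.1 hbξ
    have hvanish : ∀ s ∈ Ici b, f' s = 0 := fun s (hs : b ≤ s) =>
      have hs0 : 0 ≤ s := hb.le.trans hs
      ((hf s hs0).mono (Ici_subset_Ici.2 hs0)).eq_zero_of_eqOn_Ici fun y (hy : s ≤ y) =>
        (hconst y (hξb.trans (hs.trans hy))).trans (hconst s (hξb.trans hs)).symm
    exact ⟨0, (hasDerivWithinAt_const b _ 0).congr hvanish (hvanish b self_mem_Ici)⟩

section Cohesive

variable {ψ ψ' : ℝ → ℝ} {a b : ℝ}

theorem cohesive_of_abs_le_s18 (hab : |a| ≤ b) :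
    cohesive ψ ψ' a b = ψ b - ψ' b * ((b ^ 2 - a ^ 2) / (2 * b)) := by
  unfold cohesive
  split_ifs with h
  · have hb : |a| = b := hab.antisymm h
    rw [hb, ← sq_abs a, hb]
    simp
  · rfl

theorem abs_cohesive_sub_le (hab : |a| ≤ b) :
    |cohesive ψ ψ' a b - ψ b| ≤ |ψ' b| * (b - |a|) := by
  rw [cohesive_of_abs_le_s18 hab, sub_sub_cancel_left, abs_neg, abs_mul]
  gcongr
  rcases ((abs_nonneg a).trans hab).eq_or_lt with rfl | hb
  · simp [abs_nonpos_iff.1 hab]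
  · have hsq : a ^ 2 ≤ b ^ 2 := sq_le_sq' (abs_le.1 hab).1 (abs_le.1 hab).2
    rw [abs_of_nonneg (by positivity), div_le_iff₀ (by positivity)]
    nlinarith [sq_abs a, abs_nonneg a]

variable {w z : ℝ → ℝ} {t w' z' : ℝ}

theorem hasDerivWithinAt_cohesive_comp_of_eq_zero
    (hψ : HasDerivWithinAt ψ (ψ' 0) (Ici 0) 0) (hψ' : ContinuousWithinAt ψ' (Ici 0) 0)
    (hw : HasDerivWithinAt w w' (Ici t) t) (hz : HasDerivWithinAt z z' (Ici t) t)
    (hcone : ∀ s, |w s| ≤ z s) (hzt : z t = 0) (hz' : z' = |w'|) :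
    HasDerivWithinAt (fun s => cohesive ψ ψ' (w s) (z s)) (ψ' 0 * |w'|) (Ici t) t := by
  have hwt : w t = 0 := abs_nonpos_iff.1 (hzt ▸ hcone t)
  have hzmaps : MapsTo z (Ici t) (Ici 0) := fun s _ => (abs_nonneg _).trans (hcone s)
  have hgap : (fun s => z s - |w s|) =o[𝓝[Ici t] t] (fun s => s - t) := by
    simpa [hzt, hwt, hz'] using (hz.sub (hw.abs_Ici_of_eq_zero hwt)).isLittleO
  have hbdd : (fun s => ψ' (z s)) =O[𝓝[Ici t] t] (fun _ => (1 : ℝ)) :=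
    (hψ'.comp_of_eq hz.continuousWithinAt hzmaps hzt).tendsto.isBigO_one ℝ
  have herr : HasDerivWithinAt (fun s => cohesive ψ ψ' (w s) (z s) - ψ (z s)) 0 (Ici t) t := by
    have hbound : ∀ s, ‖cohesive ψ ψ' (w s) (z s) - ψ (z s)‖ ≤ ‖ψ' (z s) * (z s - |w s|)‖ :=
      fun s => by
        rw [Real.norm_eq_abs, Real.norm_eq_abs, abs_mul, abs_of_nonneg (sub_nonneg.2 (hcone s))]
        exact abs_cohesive_sub_le (hcone s)
    refine hasDerivWithinAt_iff_isLittleO.2 ?_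
    simpa [hwt, hzt, cohesive] using
      (IsBigO.of_bound' (Eventually.of_forall hbound)).trans_isLittleO (hbdd.mul_isLittleO hgap)
  have hψz : HasDerivWithinAt (fun s => ψ (z s)) (ψ' (z t) * z') (Ici t) t :=
    (show HasDerivWithinAt ψ (ψ' (z t)) (Ici 0) (z t) by rwa [hzt]).comp t hz hzmaps
  simpa only [Pi.add_def, add_sub_cancel, add_zero, hzt, hz'] using hψz.add herr

theorem hasDerivWithinAt_cohesive_comp_of_pos {d : ℝ}
    (hψ : HasDerivWithinAt ψ (ψ' (z t)) (Ici (z t)) (z t))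
    (hψ' : HasDerivWithinAt ψ' d (Ici (z t)) (z t))
    (hw : HasDerivWithinAt w w' (Ici t) t) (hz : HasDerivWithinAt z z' (Ici t) t)
    (hzt : 0 < z t) (hmono : MapsTo z (Ici t) (Ici (z t)))
    (hcone : ∀ s ∈ Ici t, |w s| ≤ z s) (hKKT : z' * (z t - |w t|) = 0) :
    HasDerivWithinAt (fun s => cohesive ψ ψ' (w s) (z s))
      (if |w t| < z t then ψ' (z t) / z t * w t * w' else ψ' (z t) * Real.sign (w t) * w')
      (Ici t) t := by
  have hG := (hψ.comp t hz hmono).sub ((hψ'.comp t hz hmono).mul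
    (((hz.pow 2).sub (hw.pow 2)).div (hz.const_mul 2) (by positivity)))
  refine (hG.congr (fun s hs => cohesive_of_abs_le_s18 (hcone s hs))
    (cohesive_of_abs_le_s18 (hcone t self_mem_Ici))).congr_deriv ?_
  simp only [Function.comp_apply, Pi.sub_apply, Pi.pow_apply, Pi.div_apply]
  split_ifs with hlt
  · obtain rfl : z' = 0 := (mul_eq_zero.1 hKKT).resolve_right (by linarith)
    field_simp
    ring
  · have hab : |w t| = z t := (hcone t self_mem_Ici).antisymm (not_lt.1 hlt)
    have hsq : w t ^ 2 = z t ^ 2 := by rw [← sq_abs, hab]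
    have hsign := Real.sign_mul_abs (w t)
    rw [hab] at hsign
    rw [hsq, sub_self, zero_div, mul_zero, zero_add]
    field_simp
    linear_combination (-2 * ψ' (z t) * w' * z t) * hsign

end Cohesive

theorem cohesive_chain_rule_general
    (ξc : ℝ) (psih psih' psih'' : ℝ → ℝ)
    (hconst : ∀ s ≥ ξc, psih s = psih ξc)
    (hC1 : ∀ s ∈ Set.Ici (0:ℝ), HasDerivWithinAt psih (psih' s) (Set.Ici 0) s)
    (hC1c : ContinuousOn psih' (Set.Ici 0))
    (hC2 : ∀ s ∈ Set.Icc (0:ℝ) ξc, HasDerivWithinAt psih' (psih'' s) (Set.Icc 0 ξc) s)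
    (w z : ℝ → ℝ)
    (hcone : ∀ s : ℝ, |w s| ≤ z s)
    (hmono : Monotone z)
    (t w' z' : ℝ)
    (hw' : Tendsto (fun h : ℝ => (w (t + h) - w t) / h)
      (nhdsWithin 0 (Set.Ioi 0)) (nhds w'))
    (hz' : Tendsto (fun h : ℝ => (z (t + h) - z t) / h)
      (nhdsWithin 0 (Set.Ioi 0)) (nhds z'))
    (hKKT : z' * (z t - |w t|) = 0)
    (hzero : z t = 0 → z' = |w'|) :
    Tendsto (fun h : ℝ =>
        (cohesive psih psih' (w (t + h)) (z (t + h)) -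
          cohesive psih psih' (w t) (z t)) / h)
      (nhdsWithin 0 (Set.Ioi 0))
      (nhds (if z t = 0 then psih' 0 * |w'|
        else if |w t| < z t then psih' (z t) / z t * w t * w'
        else psih' (z t) * Real.sign (w t) * w')) := by
  have hw := hasDerivWithinAt_Ici_iff_tendsto_slope_zero_right.2 hw'
  have hz := hasDerivWithinAt_Ici_iff_tendsto_slope_zero_right.2 hz'
  refine hasDerivWithinAt_Ici_iff_tendsto_slope_zero_right
    (f := fun s => cohesive psih psih' (w s) (z s)) |>.1 ?_
  have hzt : 0 ≤ z t := (abs_nonneg _).trans (hcone t)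
  rcases hzt.eq_or_lt with hz0 | hpos
  · rw [if_pos hz0.symm]
    exact hasDerivWithinAt_cohesive_comp_of_eq_zero (hC1 0 self_mem_Ici) (hC1c 0 self_mem_Ici)
      hw hz hcone hz0.symm (hzero hz0.symm)
  · rw [if_neg hpos.ne']
    obtain ⟨d, hd⟩ := exists_hasDerivWithinAt_Ici_of_eq_const hpos hconst hC1 hC2
    exact hasDerivWithinAt_cohesive_comp_of_pos ((hC1 _ hzt).mono (Ici_subset_Ici.2 hzt)) hd
      hw hz hpos (fun _ hs => hmono hs) (fun s _ => hcone s) hKKT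

/-- chain rule for the cohesive density along an evolution satisfying the
Karush–Kuhn–Tucker conditions: the right derivative of t ↦ ψ(w(t),ξ(t)) exists and equals
ψ̂'(0)·|w'| if ξ(t) = 0, (ψ̂'(ξ(t))/ξ(t))·w(t)·w' if |w(t)| < ξ(t), and
ψ̂'(ξ(t))·sign(w(t))·w' if |w(t)| = ξ(t) > 0. -/
theorem cohesive_chain_rule
    (ξc : ℝ) (hξc : 0 < ξc) (psih psih' psih'' : ℝ → ℝ)
    (hnn : ∀ s ≥ (0:ℝ), 0 ≤ psih s)
    (hconc : ConcaveOn ℝ (Set.Ici 0) psih)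
    (h0 : psih 0 = 0)
    (hpos : ∀ s > (0:ℝ), 0 < psih s)
    (hconst : ∀ s ≥ ξc, psih s = psih ξc)
    (hC1 : ∀ s ∈ Set.Ici (0:ℝ), HasDerivWithinAt psih (psih' s) (Set.Ici 0) s)
    (hC1c : ContinuousOn psih' (Set.Ici 0))
    (hC2 : ∀ s ∈ Set.Icc (0:ℝ) ξc, HasDerivWithinAt psih' (psih'' s) (Set.Icc 0 ξc) s)
    (hC2c : ContinuousOn psih'' (Set.Icc 0 ξc))
    (w z : ℝ → ℝ)
    (hznn : ∀ s : ℝ, 0 ≤ z s)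
    (hcone : ∀ s : ℝ, |w s| ≤ z s)
    (hmono : Monotone z)
    (t w' z' : ℝ)
    (hw' : Tendsto (fun h : ℝ => (w (t + h) - w t) / h)
      (nhdsWithin 0 (Set.Ioi 0)) (nhds w'))
    (hz' : Tendsto (fun h : ℝ => (z (t + h) - z t) / h)
      (nhdsWithin 0 (Set.Ioi 0)) (nhds z'))
    (hKKT : z' * (z t - |w t|) = 0)
    (hzero : z t = 0 → z' = |w'|) :
    Tendsto (fun h : ℝ =>
        (cohesive psih psih' (w (t + h)) (z (t + h)) -
          cohesive psih psih' (w t) (z t)) / h)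
      (nhdsWithin 0 (Set.Ioi 0))
      (nhds (if z t = 0 then psih' 0 * |w'|
        else if |w t| < z t then psih' (z t) / z t * w t * w'
        else psih' (z t) * Real.sign (w t) * w')) :=
  cohesive_chain_rule_general ξc psih psih' psih'' hconst hC1 hC1c hC2 w z hcone hmono t w' z' hw'
    hz' hKKT hzero
end
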